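/- arXiv:2310.17651 — 4 statements merged into one kernel-verified Lean document; each statement's English description precedes it below -/
import Mathlib

section
/- Let B = {1,...,n} be base actions, D ⊆ 2^B a feasible family, C = [−1,1]^n, and u(S, p) = ∑_{i∈S} p_i. Fix predictions p₁,...,p_T ∈ C and outcomes y₁,...,y_T ∈ C, let S_t = argmax_{S∈D} ∑_{i∈S} p_{t,i}, and let E : [T] → {0,1} be an arbitrary subsequence indicator. Suppose for every base action b ∈ B: |∑_{t=1}^T E(t)·1[b ∈ S_t]·(p_{t,b} − y_{t,b})| ≤ α_b, and |∑_{t=1}^T E(t)·(p_{t,b} − y_{t,b})| ≤ β_b. Then for every fixed D' ∈ D: ∑_{t=1}^T E(t)·(u(D', y_t) − u(S_t, y_t)) ≤ ∑_{b∈B} (α_b + β_b). -/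
/-- Subsequence regret in online combinatorial optimization. -/
theorem stmt_3 {n T : ℕ}
    (D : Finset (Finset (Fin n))) (hD : D.Nonempty)
    (p y : Fin T → Fin n → ℝ)
    (hp : ∀ t i, p t i ∈ Set.Icc (-1:ℝ) 1)
    (hy : ∀ t i, y t i ∈ Set.Icc (-1:ℝ) 1)
    (S : Fin T → Finset (Fin n))
    (hS : ∀ t, S t ∈ D)
    (hopt : ∀ t, ∀ D' ∈ D, ∑ i ∈ D', p t i ≤ ∑ i ∈ S t, p t i)
    (E : Fin T → Bool)
    (α β : Fin n → ℝ)
    (hα : ∀ b : Fin n,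
      |∑ t, (if E t then (1:ℝ) else 0) * (if b ∈ S t then (1:ℝ) else 0) * (p t b - y t b)|
        ≤ α b)
    (hβ : ∀ b : Fin n,
      |∑ t, (if E t then (1:ℝ) else 0) * (p t b - y t b)| ≤ β b) :
    ∀ D' ∈ D,
      ∑ t, (if E t then (1:ℝ) else 0) * ((∑ i ∈ D', y t i) - ∑ i ∈ S t, y t i)
        ≤ ∑ b, (α b + β b) := by
  intro D' hD'
  set e : Fin T → ℝ := fun t => if E t then (1:ℝ) else 0 with he
  have hen : ∀ t, 0 ≤ e t := by intro t; simp only [he]; split <;> norm_num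
  -- decomposition
  have hdec : ∀ t, e t * ((∑ i ∈ D', y t i) - ∑ i ∈ S t, y t i)
      ≤ e t * ((∑ i ∈ D', (y t i - p t i)) + ∑ i ∈ S t, (p t i - y t i)) := by
    intro t
    apply mul_le_mul_of_nonneg_left _ (hen t)
    have h1 := hopt t D' hD'
    simp only [Finset.sum_sub_distrib]
    linarith
  have key : ∑ t, e t * ((∑ i ∈ D', y t i) - ∑ i ∈ S t, y t i)
      ≤ (∑ b ∈ D', ∑ t, e t * (y t b - p t b))
        + ∑ b : Fin n, ∑ t, e t * (if b ∈ S t then (1:ℝ) else 0) * (p t b - y t b) := by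
    refine le_trans (Finset.sum_le_sum fun t _ => hdec t) ?_
    have : ∀ t, e t * ((∑ i ∈ D', (y t i - p t i)) + ∑ i ∈ S t, (p t i - y t i))
        = (∑ b ∈ D', e t * (y t b - p t b))
          + ∑ b : Fin n, e t * (if b ∈ S t then (1:ℝ) else 0) * (p t b - y t b) := by
      intro t
      rw [mul_add, Finset.mul_sum, Finset.mul_sum]
      congr 1
      rw [show (∑ b : Fin n, (e t * if b ∈ S t then (1:ℝ) else 0) * (p t b - y t b))
          = ∑ b : Fin n, if b ∈ S t then e t * (p t b - y t b) else 0 from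
          Finset.sum_congr rfl fun b _ => by split <;> ring,
        Finset.sum_ite_mem, Finset.univ_inter]
    rw [Finset.sum_congr rfl fun t _ => this t, Finset.sum_add_distrib]
    rw [Finset.sum_comm (t := D'), Finset.sum_comm (t := (Finset.univ : Finset (Fin n)))]
  refine key.trans ?_
  rw [Finset.sum_add_distrib]
  have hβ' : ∑ b ∈ D', ∑ t, e t * (y t b - p t b) ≤ ∑ b : Fin n, β b := by
    have h0 : ∀ b, (0:ℝ) ≤ β b := fun b => le_trans (abs_nonneg _) (hβ b)
    refine le_trans (Finset.sum_le_sum fun b _ => ?_)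
      (Finset.sum_le_sum_of_subset_of_nonneg (Finset.subset_univ D') fun b _ _ => h0 b)
    have : ∑ t, e t * (y t b - p t b) = -(∑ t, e t * (p t b - y t b)) := by
      rw [← Finset.sum_neg_distrib]; apply Finset.sum_congr rfl; intros; ring
    rw [this]
    calc -(∑ t, e t * (p t b - y t b)) ≤ |∑ t, e t * (p t b - y t b)| := neg_le_abs _
      _ ≤ β b := hβ b
  have hα' : ∑ b : Fin n, ∑ t, e t * (if b ∈ S t then (1:ℝ) else 0) * (p t b - y t b)
      ≤ ∑ b : Fin n, α b := by
    refine Finset.sum_le_sum fun b _ => le_trans (le_abs_self _) (hα b)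
  linarith [Finset.sum_add_distrib (s := (Finset.univ : Finset (Fin n))) (f := α) (g := β)]
end

section
/- In the setting of the previous lemma (disjoint binary events E₁,...,E_m covering C, objective u(p,y), event-optimal points p*_j), let ψ̂ be any distribution over C and define ψ supported on {p*_1,...,p*_m} by ψ(p*_j) = Pr_{p∼ψ̂}[E_j(p) = 1]. Then for every y ∈ C: E_{p∼ψ}[u(p, y)] ≤ E_{p∼ψ̂}[u(p, y)]. Consequently, any optimal solution of the minimax problem min over distributions on {p*_1,...,p*_m} of max_{y∈C} E[u(p,y)] is also optimal for the minimax problem over all distributions on C. -/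
/-- The objective of the disjoint-events zero-sum game. -/
def uObj {d m : ℕ} (Ev : Fin m → (Fin d → ℝ) → ℝ)
    (q : Fin d × Bool × Fin m → ℝ) (p y : Fin d → ℝ) : ℝ :=
  ∑ i, ∑ σ : Bool, ∑ j, q (i, σ, j) * (if σ then (1:ℝ) else -1) * Ev j p * (p i - y i)

/-- Collapsing any (finitely supported) distribution `ψ̂` over predictions onto the
event-optimal points `p*_j` (with weight the probability of event `j`) can only
decrease the expected objective, for every adversary choice `y ∈ C`. -/
theorem stmt_12 {d m N : ℕ}
    (C : Set (Fin d → ℝ)) (hC : Convex ℝ C)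
    (Ev : Fin m → (Fin d → ℝ) → ℝ)
    (hbin : ∀ j pp, Ev j pp = 0 ∨ Ev j pp = 1)
    (hcover : ∀ pp ∈ C, ∑ j, Ev j pp = 1)
    (q : Fin d × Bool × Fin m → ℝ) (hq : ∀ idx, 0 ≤ q idx)
    (pstar : Fin m → (Fin d → ℝ))
    (hstar1 : ∀ j, Ev j (pstar j) = 1)
    (hstar2 : ∀ j, ∀ y ∈ C, ∀ pp, Ev j pp = 1 →
      uObj Ev q (pstar j) y ≤ uObj Ev q pp y)
    (w : Fin N → ℝ) (hw : ∀ k, 0 ≤ w k) (hw1 : ∑ k, w k = 1)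
    (pt : Fin N → (Fin d → ℝ)) (hpt : ∀ k, pt k ∈ C) :
    ∀ y ∈ C,
      ∑ j, (∑ k, w k * Ev j (pt k)) * uObj Ev q (pstar j) y
        ≤ ∑ k, w k * uObj Ev q (pt k) y := by
  intro y hy
  have key : ∀ k, ∑ j, Ev j (pt k) * uObj Ev q (pstar j) y ≤ uObj Ev q (pt k) y := by
    intro k
    have h1 : ∑ j, Ev j (pt k) * uObj Ev q (pstar j) y
        ≤ ∑ j, Ev j (pt k) * uObj Ev q (pt k) y := by
      apply Finset.sum_le_sum
      intro j _
      rcases hbin j (pt k) with h | h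
      · simp [h]
      · simp only [h, one_mul]
        exact hstar2 j y hy (pt k) h
    calc ∑ j, Ev j (pt k) * uObj Ev q (pstar j) y
        ≤ ∑ j, Ev j (pt k) * uObj Ev q (pt k) y := h1
      _ = (∑ j, Ev j (pt k)) * uObj Ev q (pt k) y := by rw [Finset.sum_mul]
      _ = uObj Ev q (pt k) y := by rw [hcover (pt k) (hpt k), one_mul]
  calc ∑ j, (∑ k, w k * Ev j (pt k)) * uObj Ev q (pstar j) y
      = ∑ k, w k * ∑ j, Ev j (pt k) * uObj Ev q (pstar j) y := by
        simp only [Finset.sum_mul, Finset.mul_sum, mul_assoc]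
        rw [Finset.sum_comm]
    _ ≤ ∑ k, w k * uObj Ev q (pt k) y := by
        apply Finset.sum_le_sum
        intro k _
        exact mul_le_mul_of_nonneg_left (key k) (hw k)
end

section
/- Consider a simulated zero-sum game over T' rounds between a Learner and an Adversary with objective u(p, y) = ⟨p − y, s(p)⟩, where s : C → ℝ^d is an arbitrary state map. Suppose at each round τ, the Adversary plays a distribution D_τ over C and the Learner plays p_τ = E_{y∼D_τ}[y] (the mean of the Adversary's distribution). If the Adversary's cumulative regret (measured in u'(p,y) = ⟨−y, s(p)⟩) to every fixed y* ∈ C is at most R, then the uniform distribution p̄ over (p_1,...,p_{T'}) satisfies: max_{y∈C} E_{p∼p̄}[u(p, y)] ≤ R/T'. -/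
/-- If the Learner copies the mean of the Adversary's (finitely supported) FTPL
distribution each round, and the Adversary has cumulative regret at most `R`
(measured in `u'(p,y) = ⟨−y, s(p)⟩`), then the empirical learner strategy is an
`R/T'`-approximate minimax strategy for `u(p,y) = ⟨p − y, s(p)⟩`. -/
theorem stmt_14 {d N T' : ℕ} (hT : 0 < T')
    (C : Set (Fin d → ℝ))
    (s : (Fin d → ℝ) → Fin d → ℝ)
    (w : Fin T' → Fin N → ℝ) (hw : ∀ τ k, 0 ≤ w τ k) (hw1 : ∀ τ, ∑ k, w τ k = 1)
    (pt : Fin T' → Fin N → (Fin d → ℝ)) (hpt : ∀ τ k, pt τ k ∈ C)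
    (p : Fin T' → Fin d → ℝ)
    (hp : ∀ τ, p τ = ∑ k, w τ k • pt τ k)
    (R : ℝ)
    (hreg : ∀ ystar ∈ C,
      (∑ τ, (-∑ i, ystar i * s (p τ) i))
        - ∑ τ, ∑ k, w τ k * (-∑ i, pt τ k i * s (p τ) i) ≤ R) :
    ∀ y ∈ C, (1/(T':ℝ)) * ∑ τ, (∑ i, (p τ i - y i) * s (p τ) i) ≤ R / T' := by
  intro y hy
  have hTpos : (0:ℝ) < T' := by exact_mod_cast hT
  have key : ∀ τ, (∑ i, p τ i * s (p τ) i)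
      = ∑ k, w τ k * ∑ i, pt τ k i * s (p τ) i := by
    intro τ
    have hpc : ∀ i, p τ i = ∑ k, w τ k * pt τ k i := by
      intro i; rw [hp τ]; simp [Finset.sum_apply]
    calc (∑ i, p τ i * s (p τ) i)
        = ∑ i, ∑ k, w τ k * pt τ k i * s (p τ) i := by
          simp_rw [hpc, Finset.sum_mul]
      _ = ∑ k, ∑ i, w τ k * pt τ k i * s (p τ) i := Finset.sum_comm
      _ = ∑ k, w τ k * ∑ i, pt τ k i * s (p τ) i := by
          congr 1; ext k; rw [Finset.mul_sum]; congr 1; ext i; ring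
  have h1 : (∑ τ, (∑ i, (p τ i - y i) * s (p τ) i))
      = (∑ τ, (-∑ i, y i * s (p τ) i))
        - ∑ τ, ∑ k, w τ k * (-∑ i, pt τ k i * s (p τ) i) := by
    rw [← Finset.sum_sub_distrib]
    congr 1; ext τ
    have e1 : ∑ i, (p τ i - y i) * s (p τ) i
        = (∑ i, p τ i * s (p τ) i) - ∑ i, y i * s (p τ) i := by
      rw [← Finset.sum_sub_distrib]; congr 1; ext i; ring
    have e2 : ∑ k, w τ k * (-∑ i, pt τ k i * s (p τ) i)
        = -∑ i, p τ i * s (p τ) i := by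
      simp only [mul_neg]
      rw [Finset.sum_neg_distrib, key τ]
    rw [e1, e2]; ring
  rw [h1]
  calc (1/(T':ℝ)) * ((∑ τ, (-∑ i, y i * s (p τ) i))
        - ∑ τ, ∑ k, w τ k * (-∑ i, pt τ k i * s (p τ) i))
      ≤ (1/(T':ℝ)) * R :=
        mul_le_mul_of_nonneg_left (hreg y hy) (by positivity)
    _ = R / T' := one_div_mul_eq_div _ _
end

section
/- Let d : [0,1] × (0,1) → [0,∞) be a Bregman divergence (d(x,y) = f(x) − f(y) − f'(y)(x−y) for strictly convex differentiable f) that is L-Lipschitz in its second argument. Let y₁,...,y_n ∈ [0,1] with empirical mean μ = (1/n)∑_t y_t ∈ (0,1), let p₁,...,p_n ∈ (0,1) with |p_t − μ| ≤ ε for all t, and let q₁,...,q_n ∈ (0,1) with |q_t − ν| ≤ δ for all t, for some ν ∈ (0,1). Then: ∑_{t=1}^n d(y_t, p_t) − ∑_{t=1}^n d(y_t, q_t) ≤ L·n·(ε + δ). -/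
/-- Tangent line of a convex function lies below the graph. -/
lemma tangent_le_aux (f f' : ℝ → ℝ)
    (hconv : ConvexOn ℝ (Set.Icc (0:ℝ) 1) f)
    {z x : ℝ} (hz : z ∈ Set.Ioo (0:ℝ) 1) (hx : x ∈ Set.Icc (0:ℝ) 1)
    (hd : HasDerivAt f (f' z) z) :
    f z + f' z * (x - z) ≤ f x := by
  have hzI : z ∈ Set.Icc (0:ℝ) 1 := Set.Ioo_subset_Icc_self hz
  rcases lt_trichotomy x z with h | h | h
  · have := hconv.slope_le_of_hasDerivAt hx hzI h hd
    rw [slope_def_field] at this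
    have hpos : 0 < z - x := by linarith
    rw [div_le_iff₀ hpos] at this
    nlinarith
  · subst h; simp
  · have := hconv.le_slope_of_hasDerivAt hzI hx h hd
    rw [slope_def_field] at this
    have hpos : 0 < x - z := by linarith
    rw [le_div_iff₀ hpos] at this
    nlinarith

/-- Lipschitz Bregman comparison: a predictor concentrated (within `ε`) around the
empirical mean of the outcomes beats any predictor concentrated (within `δ`) around an
arbitrary value `ν`, up to `L·n·(ε+δ)`, for any `L`-Lipschitz Bregman divergence. -/
theorem stmt_17 {n : ℕ} (hn : 0 < n) (L ε δ : ℝ)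
    (f f' : ℝ → ℝ)
    (hconv : StrictConvexOn ℝ (Set.Icc (0:ℝ) 1) f)
    (hderiv : ∀ z ∈ Set.Ioo (0:ℝ) 1, HasDerivAt f (f' z) z)
    (hlip : ∀ x ∈ Set.Icc (0:ℝ) 1, ∀ z ∈ Set.Ioo (0:ℝ) 1, ∀ z' ∈ Set.Ioo (0:ℝ) 1,
      |(f x - f z - f' z * (x - z)) - (f x - f z' - f' z' * (x - z'))| ≤ L * |z - z'|)
    (y p q : Fin n → ℝ) (ν : ℝ)
    (hy : ∀ t, y t ∈ Set.Icc (0:ℝ) 1)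
    (hμ : (1/(n:ℝ)) * ∑ t, y t ∈ Set.Ioo (0:ℝ) 1)
    (hpmem : ∀ t, p t ∈ Set.Ioo (0:ℝ) 1)
    (hqmem : ∀ t, q t ∈ Set.Ioo (0:ℝ) 1)
    (hν : ν ∈ Set.Ioo (0:ℝ) 1)
    (hpε : ∀ t, |p t - (1/(n:ℝ)) * ∑ s, y s| ≤ ε)
    (hqδ : ∀ t, |q t - ν| ≤ δ) :
    (∑ t, (f (y t) - f (p t) - f' (p t) * (y t - p t)))
      - ∑ t, (f (y t) - f (q t) - f' (q t) * (y t - q t))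
      ≤ L * n * (ε + δ) := by
  set μ : ℝ := (1/(n:ℝ)) * ∑ s, y s with hμdef
  have hnpos : (0:ℝ) < n := Nat.cast_pos.mpr hn
  -- L ≥ 0
  have hL : 0 ≤ L := by
    have h13 : (1/3 : ℝ) ∈ Set.Ioo (0:ℝ) 1 := by norm_num
    have h12 : (1/2 : ℝ) ∈ Set.Ioo (0:ℝ) 1 := by norm_num
    have h0 : (0:ℝ) ∈ Set.Icc (0:ℝ) 1 := by norm_num
    have := hlip 0 h0 (1/3) h13 (1/2) h12
    have habs : (0:ℝ) ≤ L * |(1/3 : ℝ) - 1/2| := le_trans (abs_nonneg _) this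
    have : |(1/3 : ℝ) - 1/2| = 1/6 := by norm_num
    nlinarith [habs]
  -- pointwise Lipschitz bounds
  have hP : ∀ t, (f (y t) - f (p t) - f' (p t) * (y t - p t))
      - (f (y t) - f μ - f' μ * (y t - μ)) ≤ L * ε := by
    intro t
    have h := hlip (y t) (hy t) (p t) (hpmem t) μ hμ
    have h2 : L * |p t - μ| ≤ L * ε := mul_le_mul_of_nonneg_left (hpε t) hL
    calc _ ≤ |(f (y t) - f (p t) - f' (p t) * (y t - p t))
        - (f (y t) - f μ - f' μ * (y t - μ))| := le_abs_self _
      _ ≤ L * |p t - μ| := h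
      _ ≤ L * ε := h2
  have hQ : ∀ t, (f (y t) - f ν - f' ν * (y t - ν))
      - (f (y t) - f (q t) - f' (q t) * (y t - q t)) ≤ L * δ := by
    intro t
    have h := hlip (y t) (hy t) ν hν (q t) (hqmem t)
    have h2 : L * |ν - q t| ≤ L * δ := by
      rw [abs_sub_comm]; exact mul_le_mul_of_nonneg_left (hqδ t) hL
    calc _ ≤ |(f (y t) - f ν - f' ν * (y t - ν))
        - (f (y t) - f (q t) - f' (q t) * (y t - q t))| := le_abs_self _
      _ ≤ L * |ν - q t| := h
      _ ≤ L * δ := h2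
  -- mean-minimization step
  have hsum0 : ∑ t, (y t - μ) = 0 := by
    rw [Finset.sum_sub_distrib]
    simp only [Finset.sum_const, Finset.card_univ, Fintype.card_fin, nsmul_eq_mul, hμdef]
    field_simp
    ring
  have htan : f ν + f' ν * (μ - ν) ≤ f μ :=
    tangent_le_aux f f' hconv.convexOn hν (Set.Ioo_subset_Icc_self hμ) (hderiv ν hν)
  have hmid : ∑ t, ((f (y t) - f μ - f' μ * (y t - μ))
      - (f (y t) - f ν - f' ν * (y t - ν))) ≤ 0 := by
    have heq : ∀ t, (f (y t) - f μ - f' μ * (y t - μ))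
        - (f (y t) - f ν - f' ν * (y t - ν))
        = (f' ν - f' μ) * (y t - μ) + (f ν - f μ + f' ν * (μ - ν)) := by
      intro t; ring
    rw [Finset.sum_congr rfl fun t _ => heq t, Finset.sum_add_distrib,
      ← Finset.mul_sum, hsum0, mul_zero, zero_add, Finset.sum_const,
      Finset.card_univ, Fintype.card_fin, nsmul_eq_mul]
    have : f ν - f μ + f' ν * (μ - ν) ≤ 0 := by linarith
    exact mul_nonpos_of_nonneg_of_nonpos hnpos.le this
  -- assemble
  have hPsum : ∑ t, ((f (y t) - f (p t) - f' (p t) * (y t - p t))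
      - (f (y t) - f μ - f' μ * (y t - μ))) ≤ n * (L * ε) := by
    calc _ ≤ ∑ _t : Fin n, L * ε := Finset.sum_le_sum fun t _ => hP t
      _ = n * (L * ε) := by
        rw [Finset.sum_const, Finset.card_univ, Fintype.card_fin, nsmul_eq_mul]
  have hQsum : ∑ t, ((f (y t) - f ν - f' ν * (y t - ν))
      - (f (y t) - f (q t) - f' (q t) * (y t - q t))) ≤ n * (L * δ) := by
    calc _ ≤ ∑ _t : Fin n, L * δ := Finset.sum_le_sum fun t _ => hQ t
      _ = n * (L * δ) := by
        rw [Finset.sum_const, Finset.card_univ, Fintype.card_fin, nsmul_eq_mul]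
  have hsplit : (∑ t, (f (y t) - f (p t) - f' (p t) * (y t - p t)))
      - ∑ t, (f (y t) - f (q t) - f' (q t) * (y t - q t))
      = (∑ t, ((f (y t) - f (p t) - f' (p t) * (y t - p t))
          - (f (y t) - f μ - f' μ * (y t - μ))))
        + (∑ t, ((f (y t) - f μ - f' μ * (y t - μ))
          - (f (y t) - f ν - f' ν * (y t - ν))))
        + (∑ t, ((f (y t) - f ν - f' ν * (y t - ν))
          - (f (y t) - f (q t) - f' (q t) * (y t - q t)))) := by
    simp only [Finset.sum_sub_distrib]; ring
  rw [hsplit]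
  nlinarith [hPsum, hQsum, hmid]
end
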